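/- If i : A → X is a closed inclusion of topological spaces (i.e. a closed embedding) and f : A → Y is continuous, then in the pushout Z = Y ⊔_A X the induced map Y → Z is again a closed embedding. -/

import Mathlib

/-!
Pushouts in `TopCat` are computed on underlying sets and carry the final topology. On sets,
pushing out along an injection `t` gives an injection `b`, and a point `r x` lies in the image
of `b` exactly when `x = t a`, with `r (t a) = b (l a)`. Hence for closed `s ⊆ Y` the set
`b '' s` pulls back to `s` along `b` and to `t '' (l ⁻¹' s)` along `r`, both closed.
-/

open CategoryTheory Limits Topology

namespace TopCat

variable {A X Y Z : TopCat} {t : A ⟶ X} {l : A ⟶ Y} {r : X ⟶ Z} {b : Y ⟶ Z}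

lemma isClosed_iff_of_isPushout (h : IsPushout t l r b) (s : Set Z) :
    IsClosed s ↔ IsClosed (r ⁻¹' s) ∧ IsClosed (b ⁻¹' s) := by
  refine (isClosed_iff_of_isColimit _ h.isColimit s).trans
    ⟨fun hs => ⟨hs WalkingSpan.left, hs WalkingSpan.right⟩, ?_⟩
  rintro ⟨hr, hb⟩ (_ | _ | _)
  · exact hr.preimage t.hom.continuous
  · exact hr
  · exact hb

lemma isClosedEmbedding_of_isPushout (h : IsPushout t l r b) (ht : IsClosedEmbedding t) :
    IsClosedEmbedding b := by
  have hSet := h.map (forget TopCat)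
  have hb : Function.Injective b :=
    Types.pushoutCocone_inr_injective_of_isColimit hSet.isColimit ht.injective
  have hrb (x : X) (y : Y) : r x = b y ↔ ∃ a, t a = x ∧ l a = y :=
    Types.pushoutCocone_inl_eq_inr_iff_of_isColimit hSet.isColimit ht.injective x y
  refine .of_continuous_injective_isClosedMap b.hom.continuous hb fun s hs => ?_
  have hpre : r ⁻¹' (b '' s) = t '' (l ⁻¹' s) := by
    ext x
    constructor
    · rintro ⟨y, hy, hyx⟩
      obtain ⟨a, rfl, rfl⟩ := (hrb x y).1 hyx.symm
      exact ⟨a, hy, rfl⟩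
    · rintro ⟨a, ha, rfl⟩
      exact ⟨l a, ha, ((hrb _ _).2 ⟨a, rfl, rfl⟩).symm⟩
  rw [isClosed_iff_of_isPushout h, hb.preimage_image, hpre]
  exact ⟨ht.isClosedMap _ (hs.preimage l.hom.continuous), hs⟩

end TopCat

/-- If `i : A ⟶ X` is a closed embedding of topological spaces and
`f : A ⟶ Y` is continuous, then in the pushout `Z = Y ⊔_A X` the induced map
`Y ⟶ Z` is again a closed embedding. -/
theorem pushout_of_closedEmbedding_isClosedEmbedding
    {A X Y : TopCat} (i : A ⟶ X) (f : A ⟶ Y)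
    (hi : IsClosedEmbedding i) :
    IsClosedEmbedding (pushout.inr i f : Y ⟶ pushout i f) :=
  TopCat.isClosedEmbedding_of_isPushout (IsPushout.of_hasPushout i f) hi
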